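/- arXiv:0802.0630 — 5 statements merged into one kernel-verified Lean document; each statement's English description precedes it below -/
import Mathlib

section
/- Nagata's map N = (X − 2YΔ − ZΔ², Y + ZΔ, Z), where Δ = XZ + Y², is a polynomial automorphism of K³ with inverse (X + 2YΔ − ZΔ², Y − ZΔ, Z), for any commutative ring K. -/
/-!
Nagata's map is the time-one map of the additive group action
`t ↦ (X - 2tYΔ - t²ZΔ², Y + tZΔ, Z)`. Each of these maps fixes `Z` and `Δ`, so in the composite
of the maps for `s` and `t` the coefficients `t`, `t²` simply become `s + t`, `(s + t)²`; the
maps for `1` and `-1` are therefore mutually inverse.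
-/

open MvPolynomial

namespace Nagata

variable {K : Type*} [CommRing K]

noncomputable def delta : MvPolynomial (Fin 3) K := X 0 * X 2 + X 1 ^ 2

noncomputable def flow (t : K) : Fin 3 → MvPolynomial (Fin 3) K :=
  ![X 0 - 2 * C t * X 1 * delta - C t ^ 2 * X 2 * delta ^ 2, X 1 + C t * X 2 * delta, X 2]

lemma flow_apply_zero (t : K) :
    flow t 0 = X 0 - 2 * C t * X 1 * delta - C t ^ 2 * X 2 * delta ^ 2 := rfl

lemma flow_apply_one (t : K) : flow t 1 = X 1 + C t * X 2 * delta := rfl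

lemma flow_apply_two (t : K) : flow t 2 = X 2 := rfl

lemma aeval_flow_delta (t : K) : aeval (flow t) (delta : MvPolynomial (Fin 3) K) = delta := by
  simp only [delta, map_add, map_mul, map_pow, aeval_X, flow_apply_zero, flow_apply_one,
    flow_apply_two]
  ring

lemma aeval_flow_flow (s t : K) (i : Fin 3) :
    aeval (flow s) (flow t i) = flow (s + t) i := by
  fin_cases i <;>
    simp only [Fin.zero_eta, Fin.mk_one, Fin.reduceFinMk, flow_apply_zero, flow_apply_one,
      flow_apply_two, map_add, map_sub, map_mul, map_pow, map_ofNat, algHom_C, algebraMap_eq,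
      aeval_X, aeval_flow_delta] <;>
    ring

lemma flow_zero : flow (0 : K) = X := by
  funext i
  fin_cases i <;> simp [flow]

end Nagata

/-- Nagata's map (X − 2YΔ − ZΔ², Y + ZΔ, Z), Δ = XZ + Y², is a polynomial automorphism
with inverse (X + 2YΔ − ZΔ², Y − ZΔ, Z). -/
theorem stmt_7 (K : Type) [CommRing K] :
    let Δ : MvPolynomial (Fin 3) K := X 0 * X 2 + X 1 ^ 2
    let N : Fin 3 → MvPolynomial (Fin 3) K :=
      ![X 0 - 2 * X 1 * Δ - X 2 * Δ ^ 2, X 1 + X 2 * Δ, X 2]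
    let M : Fin 3 → MvPolynomial (Fin 3) K :=
      ![X 0 + 2 * X 1 * Δ - X 2 * Δ ^ 2, X 1 - X 2 * Δ, X 2]
    (∀ i, aeval M (N i) = X i) ∧ (∀ i, aeval N (M i) = X i) := by
  intro Δ N M
  have hN : N = Nagata.flow 1 := by
    funext i
    fin_cases i <;> simp [N, Δ, Nagata.flow, Nagata.delta]
  have hM : M = Nagata.flow (-1) := by
    funext i
    fin_cases i <;> simp [M, Δ, Nagata.flow, Nagata.delta, sub_eq_add_neg]
  rw [hN, hM]
  exact ⟨fun i => by simp only [Nagata.aeval_flow_flow, neg_add_cancel, Nagata.flow_zero],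
    fun i => by simp only [Nagata.aeval_flow_flow, add_neg_cancel, Nagata.flow_zero]⟩
end

section
/- Over 𝔽_q with q = 2^m, m ≥ 2, every invertible linear map A ∈ GL_n(𝔽_q) induces an even permutation of 𝔽_qⁿ. -/
/-!
The action of `GL_n(𝔽_q)` on `𝔽_qⁿ` composed with the sign is a character
`χ : GL_n(𝔽_q) → ℤˣ`, and it suffices to show that `χ` kills the generators: invertible
diagonal matrices and transvections. A diagonal matrix has order dividing `q - 1`, which is odd.
All transvections `1 + c E_ij` with `c ≠ 0` are conjugate under diagonal matrices, so `χ` takes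
one value `s` on them; as `q > 2` there is `b ∉ {0, -1}`, and
`(1 + E_ij)(1 + b E_ij) = 1 + (1 + b) E_ij` gives `s² = s`.
-/

theorem Int.units_eq_one_of_pow_eq_one {u : ℤˣ} {t : ℕ} (ht : Odd t) (h : u ^ t = 1) :
    u = 1 := by
  rwa [Int.units_pow_eq_pow_mod_two, Nat.odd_iff.mp ht, pow_one] at h

namespace Matrix

variable {ι K : Type*} [Fintype ι] [DecidableEq ι]

theorem diagonal_mulSingle_mul_transvection_one [Field K] {i j : ι} (hij : i ≠ j) (c : K) :
    diagonal (Pi.mulSingle i c) * transvection i j 1 =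
      transvection i j c * diagonal (Pi.mulSingle i c) := by
  ext k l
  simp only [transvection, diagonal_mul, mul_diagonal, add_apply, single_apply, one_apply,
    Pi.mulSingle_apply]
  split_ifs <;> subst_vars <;> simp_all

namespace GeneralLinearGroup

def transvection [CommRing K] {i j : ι} (hij : i ≠ j) (c : K) : GL ι K where
  val := Matrix.transvection i j c
  inv := Matrix.transvection i j (-c)
  val_inv := by rw [transvection_mul_transvection_same i j hij, add_neg_cancel, transvection_zero]
  inv_val := by rw [transvection_mul_transvection_same i j hij, neg_add_cancel, transvection_zero]

section CommRing

variable [CommRing K] {i j : ι} (hij : i ≠ j)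

theorem transvection_zero : transvection hij (0 : K) = 1 :=
  Units.ext (Matrix.transvection_zero i j)

theorem transvection_mul_transvection (b c : K) :
    transvection hij b * transvection hij c = transvection hij (b + c) :=
  Units.ext (transvection_mul_transvection_same i j hij b c)

end CommRing

section Field

variable [Field K] {G : Type*} [CommGroup G] (χ : GL ι K →* G) {i j : ι} (hij : i ≠ j)

theorem map_transvection_eq_map_transvection_one {c : K} (hc : c ≠ 0) :
    χ (transvection hij c) = χ (transvection hij 1) := by
  have hdet : (diagonal (Pi.mulSingle i c)).det ≠ 0 := by
    rwa [det_diagonal, Fintype.prod_pi_mulSingle']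
  have hconj : mkOfDetNeZero _ hdet * transvection hij 1 =
      transvection hij c * mkOfDetNeZero _ hdet :=
    Units.ext (diagonal_mulSingle_mul_transvection_one hij c)
  have := congrArg χ hconj
  rw [map_mul, map_mul, mul_comm] at this
  exact (mul_right_cancel this).symm

theorem map_transvection_eq_one [Fintype K] (hK : 2 < Fintype.card K) (c : K) :
    χ (transvection hij c) = 1 := by
  classical
  obtain ⟨b, -, hb⟩ := Finset.exists_mem_notMem_of_card_lt_card (s := {0, -1})
    (t := Finset.univ) ((Finset.card_le_two).trans_lt hK)
  have hb0 : b ≠ 0 := fun h => hb (by simp [h])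
  have hb1 : 1 + b ≠ 0 := fun h => hb (by simp [eq_neg_of_add_eq_zero_right h])
  have hone : χ (transvection hij 1) = 1 := by
    have := congrArg χ (transvection_mul_transvection hij 1 b)
    rwa [map_mul, map_transvection_eq_map_transvection_one χ hij hb0,
      map_transvection_eq_map_transvection_one χ hij hb1, mul_eq_left] at this
  rcases eq_or_ne c 0 with rfl | hc
  · rw [transvection_zero, map_one]
  · rw [map_transvection_eq_map_transvection_one χ hij hc, hone]

theorem pow_card_sub_one_eq_one_of_coe_eq_diagonal [Fintype K] {A : GL ι K} {d : ι → K}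
    (hA : (A : Matrix ι ι K) = diagonal d) : A ^ (Fintype.card K - 1) = 1 := by
  have hd : ∀ k, d k ≠ 0 := by
    have := A.det_ne_zero
    rw [hA, det_diagonal, Finset.prod_ne_zero_iff] at this
    exact fun k => this k (Finset.mem_univ k)
  ext : 1
  rw [Units.val_pow_eq_pow_val, hA, diagonal_pow, Units.val_one, ← diagonal_one]
  congr 1
  funext k
  exact FiniteField.pow_card_sub_one_eq_one (d k) (hd k)

theorem monoidHom_intUnits_eq_one [Fintype K] (hK : 2 < Fintype.card K)
    (hodd : Odd (Fintype.card K - 1)) (χ : GL ι K →* ℤˣ) : χ = 1 := by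
  refine MonoidHom.ext fun A => ?_
  refine diagonal_transvection_induction_of_det_ne_zero
    (fun M => ∀ A : GL ι K, (A : Matrix ι ι K) = M → χ A = 1) _ A.det_ne_zero ?_ ?_ ?_ A rfl
  · intro d _ A hA
    refine Int.units_eq_one_of_pow_eq_one hodd ?_
    rw [← map_pow, pow_card_sub_one_eq_one_of_coe_eq_diagonal hA, map_one]
  · intro t A hA
    rw [show A = transvection t.hij t.c from Units.ext hA]
    exact map_transvection_eq_one χ t.hij hK t.c
  · intro M N hM hN hχM hχN A hA
    rw [show A = mkOfDetNeZero M hM * mkOfDetNeZero N hN from Units.ext hA, map_mul,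
      hχM _ rfl, hχN _ rfl, one_mul]

end Field

end GeneralLinearGroup

end Matrix

/-- Over 𝔽_q with q = 2^m, m ≥ 2, every invertible linear map induces an even
permutation of 𝔽_qⁿ. -/
theorem stmt_11 (K : Type) [Field K] [Fintype K] [DecidableEq K] (m : ℕ) (hm : 2 ≤ m)
    (hq : Fintype.card K = 2 ^ m) (n : ℕ) (A : GL (Fin n) K) :
    ∃ σ : Equiv.Perm (Fin n → K),
      (∀ v, σ v = (A : Matrix (Fin n) (Fin n) K).mulVec v) ∧ Equiv.Perm.sign σ = 1 := by
  have hK : 2 < Fintype.card K := hq ▸ (Nat.pow_lt_pow_right one_lt_two (by omega : 1 < m))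
  have hodd : Odd (Fintype.card K - 1) :=
    hq ▸ Nat.Even.sub_odd Nat.one_le_two_pow (Nat.even_pow.mpr ⟨even_two, by omega⟩) odd_one
  refine ⟨MulAction.toPerm A, fun v => rfl, ?_⟩
  exact DFunLike.congr_fun (Matrix.GeneralLinearGroup.monoidHom_intUnits_eq_one hK hodd
    (Equiv.Perm.sign.comp (MulAction.toPermHom _ _))) A
end

section
/- Over 𝔽_q with q = 2^m, m ≥ 2, every elementary polynomial automorphism (X₁ + f(X₂,…,Xₙ), X₂, …, Xₙ), with n ≥ 2 and f ∈ 𝔽_q[X₂,…,Xₙ], induces an even permutation of 𝔽_qⁿ. -/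
/-!
Split `𝔽_qⁿ` as `𝔽_q × 𝔽_q^{n-1}`: the elementary map translates each fibre `𝔽_q × {w}`
by `f(w)`, so its sign is the product of the signs of the translations `x ↦ x + f(w)` of `𝔽_q`.
All nonzero translations are conjugate under the scalings `x ↦ a x`, so they share one sign `s`;
when `𝔽_q` has an element `d ∉ {0, -1}`, the identity `x + (1 + d) = (x + d) + 1` gives
`s = s²`, hence `s = 1`.
-/

open MvPolynomial Equiv Equiv.Perm

section Translation

variable {K : Type*} [DivisionRing K] [Fintype K] [DecidableEq K]

theorem sign_addRight_mul_left (c : K) {a : K} (ha : a ≠ 0) :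
    sign (Equiv.addRight (a * c)) = sign (Equiv.addRight c) := by
  have hconj : Equiv.addRight (a * c) = (Equiv.mulLeft₀ a ha).permCongr (Equiv.addRight c) := by
    ext x
    simp [mul_add, mul_inv_cancel_left₀ ha]
  rw [hconj, sign_permCongr]

theorem sign_addRight_eq_one (hK : 2 < Fintype.card K) (c : K) :
    sign (Equiv.addRight c) = 1 := by
  obtain ⟨d, -, hd⟩ := Finset.exists_mem_notMem_of_card_lt_card (s := ({0, -1} : Finset K))
    (t := .univ) (Finset.card_le_two.trans_lt (by rwa [Finset.card_univ]))
  simp only [Finset.mem_insert, Finset.mem_singleton, not_or] at hd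
  have hsign : ∀ b : K, b ≠ 0 → sign (Equiv.addRight b) = sign (Equiv.addRight (1 : K)) :=
    fun b hb => by simpa using sign_addRight_mul_left 1 hb
  have hsq : sign (Equiv.addRight (1 : K)) = sign (Equiv.addRight (1 : K)) ^ 2 :=
    calc sign (Equiv.addRight (1 : K))
        = sign (Equiv.addRight (1 + d)) :=
          (hsign _ fun h => hd.2 (eq_neg_of_add_eq_zero_right h)).symm
      _ = sign (Equiv.addRight d) * sign (Equiv.addRight (1 : K)) := by rw [addRight_add, map_mul]
      _ = sign (Equiv.addRight (1 : K)) ^ 2 := by rw [hsign d hd.1, sq]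
  rcases eq_or_ne c 0 with rfl | hc
  · simp
  · rw [hsign c hc, hsq, Int.units_sq]

end Translation

section Shear

variable {ι A : Type*} [DecidableEq ι] [AddGroup A]

def coordShear (i : ι) (g : ({j // j ≠ i} → A) → A) : Perm (ι → A) :=
  (funSplitAt i A).symm.permCongr (prodCongrLeft fun w => Equiv.addRight (g w))

theorem coordShear_apply (i : ι) (g : ({j // j ≠ i} → A) → A) (v : ι → A) :
    coordShear i g v = Function.update v i (v i + g fun j => v j) := by
  ext j
  by_cases hj : j = i
  · subst hj
    simp [coordShear]
  · simp [coordShear, hj]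

theorem sign_coordShear [Fintype ι] [Fintype A] [DecidableEq A] (i : ι)
    (g : ({j // j ≠ i} → A) → A) :
    sign (coordShear i g) = ∏ w, sign (Equiv.addRight (g w)) := by
  rw [coordShear, sign_permCongr, sign_prodCongrLeft]

end Shear

/-- Over 𝔽_q with q = 2^m, m ≥ 2, every elementary automorphism
(X₁ + f(X₂,…,Xₙ), X₂, …, Xₙ) (n ≥ 2) induces an even permutation of 𝔽_qⁿ. -/
theorem stmt_12 (K : Type) [Field K] [Fintype K] [DecidableEq K] (m : ℕ) (hm : 2 ≤ m)
    (hq : Fintype.card K = 2 ^ m) (n : ℕ)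
    (f : MvPolynomial (Fin (n + 2)) K) (hf : (0 : Fin (n + 2)) ∉ f.vars) :
    ∃ σ : Equiv.Perm (Fin (n + 2) → K),
      (∀ v i, σ v i = if i = 0 then v 0 + eval v f else v i) ∧ Equiv.Perm.sign σ = 1 := by
  have hK : 2 < Fintype.card K := by
    rw [hq]
    calc 2 < 2 ^ 2 := by norm_num
      _ ≤ 2 ^ m := Nat.pow_le_pow_right two_pos hm
  obtain ⟨g, rfl⟩ :
      ∃ g : MvPolynomial {j : Fin (n + 2) // j ≠ 0} K, rename Subtype.val g = f := by
    refine exists_rename_eq_of_vars_subset_range f _ Subtype.val_injective fun j hj => ?_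
    exact ⟨⟨j, fun h => hf (h ▸ hj)⟩, rfl⟩
  refine ⟨coordShear 0 (eval · g), fun v i => ?_, ?_⟩
  · rw [coordShear_apply, Function.update_apply, eval_rename]
    rfl
  · simp [sign_coordShear, sign_addRight_eq_one hK]
end

section
/- Over 𝔽_q with q = 2^m, m ≥ 2, every tame polynomial automorphism of 𝔽_qⁿ (n ≥ 2) induces an even permutation of 𝔽_qⁿ; i.e., ε(TAₙ(𝔽_q)) ⊆ Alt(𝔽_qⁿ). -/
/-!
An elementary automorphism acts on `𝔽_qⁿ` as a shear `v ↦ v + g(v) eᵢ` with `g`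
independent of `vᵢ`. Shears along `eᵢ` compose by adding their `g`'s, and conjugating by
the scaling of the `i`-th coordinate by `a ≠ 0` turns `g` into `a g`. Taking `a ∉ {0, -1}`
(possible since `q > 2`), the sign `s` of the shear by `g` satisfies
`s = sign (shear by (1 + a) g) = s · s`, so `s = 1`. By row reduction `GLₙ(𝔽_q)` is
generated by transvections, which are shears, and invertible diagonal matrices, whose order
divides `q - 1`; this is odd since `q` is even, so they are even too.
-/

open MvPolynomial

/-- The tame subgroup of polynomial automorphisms: generated by invertible linear maps
and elementary automorphisms (closed under composition; generators include their inverses). -/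
inductive IsTame (K : Type) [Field K] (n : ℕ) : (Fin n → MvPolynomial (Fin n) K) → Prop
  | linear (A : GL (Fin n) K) :
      IsTame K n (fun i => ∑ j, MvPolynomial.C ((A : Matrix (Fin n) (Fin n) K) i j) * MvPolynomial.X j)
  | elementary (i : Fin n) (f : MvPolynomial (Fin n) K) (hf : i ∉ f.vars) :
      IsTame K n (Function.update MvPolynomial.X i (MvPolynomial.X i + f))
  | comp {F G : Fin n → MvPolynomial (Fin n) K} :
      IsTame K n F → IsTame K n G → IsTame K n (fun i => MvPolynomial.aeval G (F i))

open Equiv Function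

section EvenPerm

variable {α : Type*} [Fintype α] [DecidableEq α]

theorem Equiv.Perm.sign_eq_one_of_pow_odd_eq_one {σ : Perm α} {k : ℕ} (hk : Odd k)
    (hσ : σ ^ k = 1) : Perm.sign σ = 1 := by
  have h := congrArg Perm.sign hσ
  rwa [map_pow, map_one, Int.units_pow_eq_pow_mod_two, Nat.odd_iff.mp hk, pow_one] at h

theorem MulAction.sign_toPerm_of_odd_card {G : Type*} [Group G] [MulAction G α]
    (hG : Odd (Nat.card G)) (g : G) : Perm.sign (MulAction.toPerm g : Perm α) = 1 :=
  Perm.sign_eq_one_of_pow_odd_eq_one hG <| by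
    change MulAction.toPermHom G α g ^ _ = 1
    rw [← map_pow, pow_card_eq_one', map_one]

def IsEvenPerm (f : α → α) : Prop :=
  ∃ τ ∈ alternatingGroup α, ⇑τ = f

theorem IsEvenPerm.comp {f g : α → α} (hf : IsEvenPerm f) (hg : IsEvenPerm g) :
    IsEvenPerm (f ∘ g) := by
  obtain ⟨τ, hτ, rfl⟩ := hf
  obtain ⟨ρ, hρ, rfl⟩ := hg
  exact ⟨τ * ρ, mul_mem hτ hρ, rfl⟩

end EvenPerm

section DependsOn

variable {ι β : Type*} {g : (ι → β) → β}

theorem DependsOn.apply_update [DecidableEq ι] {i : ι} (hg : DependsOn g {i}ᶜ) (v : ι → β)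
    (x : β) : g (Function.update v i x) = g v :=
  hg fun _ hj => update_of_ne hj _ _

theorem DependsOn.add [Add β] {h : (ι → β) → β} {s : Set ι} (hg : DependsOn g s)
    (hh : DependsOn h s) : DependsOn (g + h) s :=
  fun _ _ hxy => by simp only [Pi.add_apply, hg hxy, hh hxy]

theorem DependsOn.const_mul [Mul β] {s : Set ι} (hg : DependsOn g s) (c : β) :
    DependsOn (fun v => c * g v) s :=
  fun _ _ hxy => congrArg (c * ·) (hg hxy)

end DependsOn

section Shear

variable {ι K : Type*} [DecidableEq ι] [CommRing K] {i : ι} {g : (ι → K) → K}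

variable (i g) in
def shear (hg : DependsOn g {i}ᶜ) : Perm (ι → K) where
  toFun v := update v i (v i + g v)
  invFun v := update v i (v i - g v)
  left_inv v := by simp [hg.apply_update]
  right_inv v := by simp [hg.apply_update]

theorem shear_apply (hg : DependsOn g {i}ᶜ) (v : ι → K) :
    shear i g hg v = update v i (v i + g v) :=
  rfl

theorem shear_mul_shear {h : (ι → K) → K} (hg : DependsOn g {i}ᶜ) (hh : DependsOn h {i}ᶜ) :
    shear i g hg * shear i h hh = shear i (g + h) (hg.add hh) := by
  ext v : 1
  simp only [Perm.mul_apply, shear_apply, hg.apply_update, update_idem, update_self, Pi.add_apply]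
  congr 1
  ring

theorem toPerm_mulSingle_mul_shear (hg : DependsOn g {i}ᶜ) (a : Kˣ) :
    MulAction.toPerm (Pi.mulSingle i a : ι → Kˣ) * shear i g hg =
      shear i (fun v => a * g v) (hg.const_mul a) *
        MulAction.toPerm (Pi.mulSingle i a : ι → Kˣ) := by
  have hscale : ∀ v : ι → K, (Pi.mulSingle i a : ι → Kˣ) • v = update v i (a * v i) := by
    intro v
    ext j
    rcases eq_or_ne j i with rfl | hj
    · simp [Units.smul_def]
    · simp [hj]
  ext v : 1
  simp only [Perm.mul_apply, MulAction.toPerm_apply, hscale, shear_apply, hg.apply_update,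
    update_idem, update_self]
  congr 1
  ring

end Shear

theorem sign_shear {ι K : Type*} [Fintype ι] [DecidableEq ι] [Field K] [Fintype K]
    [DecidableEq K] (hK : 2 < Fintype.card K) {i : ι} {g : (ι → K) → K}
    (hg : DependsOn g {i}ᶜ) : Perm.sign (shear i g hg) = 1 := by
  have hscale : ∀ c : K, c ≠ 0 →
      Perm.sign (shear i (fun v => c * g v) (hg.const_mul c)) = Perm.sign (shear i g hg) := by
    intro c hc
    have h := congrArg Perm.sign (toPerm_mulSingle_mul_shear hg (Units.mk0 c hc))
    rw [map_mul, map_mul, mul_comm] at h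
    exact (mul_right_cancel h).symm
  obtain ⟨a, -, ha⟩ := Finset.exists_mem_notMem_of_card_lt_card
    (s := {0, -1}) (t := Finset.univ) (Finset.card_le_two.trans_lt hK)
  simp only [Finset.mem_insert, Finset.mem_singleton, not_or] at ha
  have hsplit : shear i (fun v => (1 + a) * g v) (hg.const_mul _) =
      shear i g hg * shear i (fun v => a * g v) (hg.const_mul a) := by
    rw [shear_mul_shear]
    congr 1
    funext v
    simp only [Pi.add_apply]
    ring
  have h := congrArg Perm.sign hsplit
  rw [map_mul, hscale a ha.1, hscale (1 + a) fun h => ha.2 (eq_neg_of_add_eq_zero_right h)] at h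
  exact left_eq_mul.mp h

section Linear

variable {ι K : Type*} [Field K]

theorem Matrix.TransvectionStruct.dependsOn_c_mul_apply (t : TransvectionStruct ι K) :
    DependsOn (fun v : ι → K => t.c * v t.j) {t.i}ᶜ :=
  fun _ _ hxy => congrArg (t.c * ·) (hxy t.j t.hij.symm)

variable [Fintype ι] [DecidableEq ι]

theorem Matrix.TransvectionStruct.mulVec_eq_shear (t : TransvectionStruct ι K) :
    t.toMatrix.mulVec = shear t.i _ t.dependsOn_c_mul_apply := by
  ext v k
  rw [toMatrix, transvection, add_mulVec, one_mulVec, single_mulVec, shear_apply]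
  rcases eq_or_ne k t.i with rfl | hk
  · simp
  · simp [hk]

theorem Matrix.mulVec_diagonal_eq_toPerm (u : ι → Kˣ) :
    (diagonal fun j => (u j : K)).mulVec = ⇑(MulAction.toPerm u) := by
  ext v j
  simp [mulVec_diagonal, Units.smul_def]

variable [Fintype K] [DecidableEq K]

theorem Matrix.isEvenPerm_mulVec (hK : 2 < Fintype.card K) (heven : Even (Fintype.card K))
    {M : Matrix ι ι K} (hM : M.det ≠ 0) : IsEvenPerm M.mulVec := by
  refine diagonal_transvection_induction_of_det_ne_zero (fun A => IsEvenPerm A.mulVec) M hM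
    ?diagonal ?transvection ?mul
  case diagonal =>
    intro D hD
    have hD0 : ∀ j, D j ≠ 0 := by
      simpa [det_diagonal, Finset.prod_ne_zero_iff] using hD
    have hodd : Odd (Nat.card (ι → Kˣ)) := by
      rw [Nat.card_fun, Nat.card_units, Nat.card_eq_fintype_card]
      exact (Nat.Even.sub_odd Fintype.card_pos heven odd_one).pow
    refine ⟨MulAction.toPerm fun j => Units.mk0 (D j) (hD0 j),
      Perm.mem_alternatingGroup.mpr (MulAction.sign_toPerm_of_odd_card hodd _), ?_⟩
    rw [← mulVec_diagonal_eq_toPerm]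
    rfl
  case transvection =>
    intro t
    rw [t.mulVec_eq_shear]
    exact ⟨_, Perm.mem_alternatingGroup.mpr (sign_shear hK _), rfl⟩
  case mul =>
    intro A B _ _ hA hB
    convert hA.comp hB using 1
    ext v
    simp [mulVec_mulVec]

end Linear

section Tame

variable {ι K : Type*} [CommSemiring K]

theorem MvPolynomial.dependsOn_eval (f : MvPolynomial ι K) :
    DependsOn (fun v => eval v f) f.vars :=
  fun _ _ hxy => eval₂Hom_congr' rfl (fun j hj _ => hxy j hj) rfl

noncomputable def polyMap (F : ι → MvPolynomial ι K) (v : ι → K) : ι → K :=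
  fun i => eval v (F i)

theorem polyMap_aeval (F G : ι → MvPolynomial ι K) :
    polyMap (fun i => aeval G (F i)) = polyMap F ∘ polyMap G := by
  ext v i
  exact eval₂Hom_bind₁ (RingHom.id K) v G (F i)

theorem polyMap_linear [Fintype ι] (A : Matrix ι ι K) :
    polyMap (fun i => ∑ j, C (A i j) * X j) = A.mulVec := by
  ext v i
  simp [polyMap, Matrix.mulVec, dotProduct]

end Tame

theorem polyMap_update_X_add {ι K : Type*} [DecidableEq ι] [CommRing K] {i : ι}
    {f : MvPolynomial ι K} (hf : i ∉ f.vars) :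
    polyMap (update X i (X i + f)) = shear i (fun v => eval v f)
      ((dependsOn_eval f).mono (Set.subset_compl_singleton_iff.mpr hf)) := by
  ext v k
  rcases eq_or_ne k i with rfl | hk
  · simp [polyMap, shear_apply]
  · simp [polyMap, shear_apply, hk]

theorem IsTame.isEvenPerm_polyMap {K : Type} [Field K] [Fintype K] [DecidableEq K] {n : ℕ}
    (hK : 2 < Fintype.card K) (heven : Even (Fintype.card K))
    {F : Fin n → MvPolynomial (Fin n) K} (hF : IsTame K n F) : IsEvenPerm (polyMap F) := by
  induction hF with
  | linear A =>
    rw [polyMap_linear]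
    exact Matrix.isEvenPerm_mulVec hK heven (A.isUnit.map Matrix.detMonoidHom).ne_zero
  | elementary i f hf =>
    rw [polyMap_update_X_add hf]
    exact ⟨_, Perm.mem_alternatingGroup.mpr (sign_shear hK _), rfl⟩
  | comp _ _ ihF ihG =>
    rw [polyMap_aeval]
    exact ihF.comp ihG

theorem stmt_13_general (K : Type) [Field K] [Fintype K] [DecidableEq K] (m : ℕ) (hm : 2 ≤ m)
    (hq : Fintype.card K = 2 ^ m) (n : ℕ)
    (F : Fin n → MvPolynomial (Fin n) K) (hF : IsTame K n F)
    (σ : Equiv.Perm (Fin n → K)) (hσ : ∀ v, σ v = fun i => eval v (F i)) :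
    Equiv.Perm.sign σ = 1 := by
  have hK : 2 < Fintype.card K := hq ▸ (Nat.lt_pow_self one_lt_two).trans_le
    (Nat.pow_le_pow_right two_pos hm)
  have heven : Even (Fintype.card K) := hq ▸ (Nat.even_pow.mpr ⟨even_two, by omega⟩)
  obtain ⟨τ, hτ, hτF⟩ := hF.isEvenPerm_polyMap hK heven
  obtain rfl : σ = τ := Equiv.ext fun v => (hσ v).trans (congrFun hτF v).symm
  exact Perm.mem_alternatingGroup.mp hτ

/-- Over 𝔽_q, q = 2^m, m ≥ 2, every tame automorphism (n ≥ 2) induces an even permutation: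
ε(TAₙ(𝔽_q)) ⊆ Alt(𝔽_qⁿ). -/
theorem stmt_13 (K : Type) [Field K] [Fintype K] [DecidableEq K] (m : ℕ) (hm : 2 ≤ m)
    (hq : Fintype.card K = 2 ^ m) (n : ℕ) (hn : 2 ≤ n)
    (F : Fin n → MvPolynomial (Fin n) K) (hF : IsTame K n F)
    (σ : Equiv.Perm (Fin n → K)) (hσ : ∀ v, σ v = fun i => eval v (F i)) :
    Equiv.Perm.sign σ = 1 :=
  stmt_13_general K m hm hq n F hF σ hσ
end

section
/- For n ≥ 2 and q odd or q = 2, every permutation of 𝔽_qⁿ is induced by some tame polynomial automorphism: ε(TAₙ(𝔽_q)) = Sym(𝔽_qⁿ). -/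
/-
The permutations of 𝔽_qⁿ induced by tame automorphisms form a subgroup G of Sym(𝔽_qⁿ)
(closed under inverses because Sym(𝔽_qⁿ) is finite). G contains the affine group, hence is
2-transitive and so primitive; and since every function 𝔽_qⁿ⁻¹ → 𝔽_q is a polynomial, G contains
every map adding to one coordinate an arbitrary function of the others. The commutator of two such
maps moving only the points of two different coordinate axes is a 3-cycle, so by Jordan's theorem
G contains the alternating group. Finally G contains an odd permutation: for q = 2 the unit shift
along one coordinate axis is a transposition, and for q odd scaling one coordinate by a generator
of 𝔽_q^× is a product of q^(n-1) cycles of even length q - 1.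
-/

open MvPolynomial

open Equiv Equiv.Perm MulAction Matrix

theorem MvPolynomial.eval_aeval {R σ τ : Type*} [CommSemiring R] (v : τ → R)
    (g : σ → MvPolynomial τ R) (p : MvPolynomial σ R) :
    eval v (aeval g p) = eval (fun i => eval v (g i)) p := by
  rw [aeval_eq_bind₁]
  exact aeval_bind₁ v g p

theorem MvPolynomial.exists_eval_eq {K σ : Type*} [Field K] [Fintype K] [Finite σ]
    (f : (σ → K) → K) : ∃ p : MvPolynomial σ K, ∀ v, eval v p = f v := by
  obtain ⟨p, -, hp⟩ :=
    Submodule.mem_map.1 (map_restrict_dom_evalₗ K σ ▸ Submodule.mem_top (x := f))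
  exact ⟨p, congrFun hp⟩

theorem exists_linearEquiv_apply_eq {K V : Type*} [Field K] [AddCommGroup V] [Module K V]
    {u w : V} (hu : u ≠ 0) (hw : w ≠ 0) : ∃ g : V ≃ₗ[K] V, g u = w := by
  have := isPretransitive_of_is_two_pretransitive (G := V ≃ₗ[K] V) (α := Projectivization K V)
  obtain ⟨g, hg⟩ :=
    exists_smul_eq (V ≃ₗ[K] V) (Projectivization.mk K u hu) (Projectivization.mk K w hw)
  rw [Projectivization.smul_mk, Projectivization.mk_eq_mk_iff] at hg
  obtain ⟨a, ha⟩ := hg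
  refine ⟨g.trans (LinearEquiv.smulOfUnit a⁻¹), ?_⟩
  rw [LinearEquiv.smul_def] at ha
  change a⁻¹ • g u = w
  rw [← ha, inv_smul_smul]

theorem Equiv.Perm.isThreeCycle_commutator {X : Type*} [Fintype X] [DecidableEq X]
    {α β : Perm X} {t : X} (hαβ : ∀ x, α x ≠ x → β x ≠ x → x = t) (hα : α t ≠ t) (hβ : β t ≠ t) :
    IsThreeCycle (α * β * α⁻¹ * β⁻¹) := by
  have hαα {x : X} : α x ≠ x → α (α x) ≠ α x := mt α.injective.eq_iff.1
  have hββ {x : X} : β x ≠ x → β (β x) ≠ β x := mt β.injective.eq_iff.1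
  have hβfix {x : X} (h : α x ≠ x) (hx : x ≠ t) : β x = x := by_contra (hx <| hαβ x h ·)
  have hαfix {x : X} (h : β x ≠ x) (hx : x ≠ t) : α x = x := by_contra (hx <| hαβ x · h)
  have hβαt : β (α t) = α t := hβfix (hαα hα) hα
  have hαβt : α (β t) = β t := hαfix (hββ hβ) hβ
  have hαtβt : α t ≠ β t := fun h => hββ hβ (by rw [← h, hβαt])
  set γ := swap t (β t) * swap t (α t)
  suffices α * β * α⁻¹ * β⁻¹ = γ from
    this ▸ isThreeCycle_swap_mul_swap_same hβ.symm hα.symm hαtβt.symm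
  have hγfix {y : X} (h₁ : y ≠ t) (h₂ : y ≠ α t) (h₃ : y ≠ β t) : γ y = y := by
    simp [γ, swap_apply_of_ne_of_ne, *]
  rw [mul_inv_eq_iff_eq_mul, mul_inv_eq_iff_eq_mul]
  ext x
  simp only [Perm.mul_apply]
  by_cases hxt : x = t
  · subst hxt
    simp [γ, hαβt, hβαt]
  by_cases hxα : α x = x
  · rw [hxα]
    by_cases hxβ : β x = x
    · rw [hxβ, hxα, hγfix hxt (fun h => hαα hα (h ▸ hxα)) (fun h => hββ hβ (h ▸ hxβ))]
    by_cases hβxt : β x = t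
    · simp [γ, hβxt, swap_apply_of_ne_of_ne hα hαtβt]
    · rw [hαfix (hββ hxβ) hβxt,
        hγfix hβxt (fun h => hββ hxβ (by rw [h, hβαt])) (β.injective.ne hxt)]
  · rw [hβfix hxα hxt]
    by_cases hαxt : α x = t
    · simp [γ, hαxt, swap_apply_of_ne_of_ne hβ hαtβt.symm]
    · rw [hβfix (hαα hxα) hαxt,
        hγfix hαxt (α.injective.ne hxt) (fun h => hαα hxα (by rw [h, hαβt]))]

theorem Equiv.Perm.eq_top_of_alternatingGroup_le {X : Type*} [Fintype X] [DecidableEq X]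
    {G : Subgroup (Perm X)} (hG : alternatingGroup X ≤ G) {σ : Perm X} (hσ : σ ∈ G)
    (hσsign : sign σ = -1) : G = ⊤ := by
  refine eq_top_iff.2 fun τ _ => ?_
  rcases Int.units_eq_one_or (sign τ) with hτ | hτ
  · exact hG hτ
  · have : τ * σ⁻¹ ∈ G := hG (by simp [mem_alternatingGroup, hτ, hσsign])
    simpa using mul_mem this hσ

section FiniteField

variable {K : Type*} [Field K] [Fintype K] [DecidableEq K]

theorem sign_addRight_one_of_card_eq_two (hq : Fintype.card K = 2) :
    sign (Equiv.addRight (1 : K)) = -1 := by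
  refine IsSwap.sign_eq (card_support_eq_two.1 ?_)
  rw [← hq, ← Finset.card_univ]
  congr
  ext x
  simp

theorem exists_sign_toPerm_eq_neg_one_of_odd_card (hq : Odd (Fintype.card K)) :
    ∃ u : Kˣ, sign (MulAction.toPerm u : Perm K) = -1 := by
  obtain ⟨u, hu⟩ := IsCyclic.exists_generator (α := Kˣ)
  have hu1 : u ≠ 1 := by
    rintro rfl
    have hK : Fintype.card Kˣ = 1 := Fintype.card_eq_one_iff.2 ⟨1, fun v => by simpa using hu v⟩
    rw [Fintype.card_units] at hK
    have := Fintype.one_lt_card (α := K)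
    obtain ⟨m, hm⟩ := hq
    omega
  have hfix (x : K) : u • x = x ↔ x = 0 := by
    rw [Units.smul_def, smul_eq_mul, mul_left_eq_self₀, Units.val_eq_one, or_iff_right hu1]
  have hsupp : (MulAction.toPerm u : Perm K).support = Finset.univ.erase 0 := by
    ext x; simp [hfix]
  have hcycle : (MulAction.toPerm u : Perm K).IsCycle := by
    refine ⟨1, by simp [hfix], fun y hy => ?_⟩
    obtain ⟨k, hk⟩ := hu (Units.mk0 y (by simpa [hfix] using hy))
    refine ⟨k, ?_⟩
    change (MulAction.toPermHom Kˣ K u ^ k) 1 = y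
    rw [← map_zpow]
    simp [hk]
  refine ⟨u, ?_⟩
  rw [hcycle.sign, hsupp, Finset.card_erase_of_mem (Finset.mem_univ _), Finset.card_univ,
    (Nat.Odd.sub_odd hq odd_one).neg_one_pow]

end FiniteField

section CoordPerm

variable {ι α : Type*} [DecidableEq ι]

def coordPerm (i : ι) (f : ({j // j ≠ i} → α) → Perm α) : Perm (ι → α) :=
  (funSplitAt i α).symm.permCongr (prodCongrLeft f)

theorem coordPerm_apply (i : ι) (f : ({j // j ≠ i} → α) → Perm α) (v : ι → α) :
    coordPerm i f v = Function.update v i (f (fun j => v j) (v i)) := by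
  ext j
  by_cases hj : j = i
  · subst hj; simp [coordPerm, permCongr_apply]
  · simp [coordPerm, permCongr_apply, hj]

theorem sign_coordPerm [Fintype ι] [Fintype α] [DecidableEq α] (i : ι)
    (f : ({j // j ≠ i} → α) → Perm α) :
    sign (coordPerm i f) = ∏ r, sign (f r) := by
  rw [coordPerm, sign_permCongr, sign_prodCongrLeft]

end CoordPerm

section Tame

variable {K : Type} [Field K] {n : ℕ}

def IsTamePerm (σ : Perm (Fin n → K)) : Prop :=
  ∃ F : Fin n → MvPolynomial (Fin n) K, IsTame K n F ∧ ∀ v, σ v = fun i => eval v (F i)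

theorem IsTamePerm.mul {σ τ : Perm (Fin n → K)} (hσ : IsTamePerm σ) (hτ : IsTamePerm τ) :
    IsTamePerm (σ * τ) := by
  obtain ⟨F, hF, hσF⟩ := hσ
  obtain ⟨G, hG, hτG⟩ := hτ
  refine ⟨fun i => aeval G (F i), hF.comp hG, fun v => ?_⟩
  simp only [Perm.mul_apply, hσF, hτG, eval_aeval]

theorem isTamePerm_of_linearMap {σ : Perm (Fin n → K)} (f : (Fin n → K) →ₗ[K] (Fin n → K))
    (hσf : ∀ v, σ v = f v) : IsTamePerm σ := by
  have hf : Function.Bijective f := by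
    simpa only [funext hσf] using σ.bijective
  set A := Matrix.GeneralLinearGroup.toLin.symm
    (LinearMap.GeneralLinearGroup.ofLinearEquiv (LinearEquiv.ofBijective f hf))
  refine ⟨_, IsTame.linear A, fun v => ?_⟩
  have hA : (A : Matrix (Fin n) (Fin n) K) *ᵥ v = f v := by
    rw [← Matrix.mulVecLin_apply, ← Matrix.GeneralLinearGroup.toLin_apply]
    simp [A]
  ext i
  simp [hσf, ← hA, Matrix.mulVec, dotProduct, mul_comm]

theorem isTamePerm_one : IsTamePerm (1 : Perm (Fin n → K)) :=
  isTamePerm_of_linearMap LinearMap.id fun _ => rfl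

theorem isTamePerm_coordPerm_toPerm (i : Fin n) (u : Kˣ) :
    IsTamePerm (coordPerm i fun _ => (MulAction.toPerm u : Perm K)) := by
  refine isTamePerm_of_linearMap (diagonal (Function.update 1 i (u : K))).mulVecLin fun v => ?_
  ext j
  by_cases hj : j = i
  · subst hj; simp [coordPerm_apply, mulVec_diagonal, Units.smul_def]
  · simp [coordPerm_apply, mulVec_diagonal, hj]

def axisShift [DecidableEq K] (i : Fin n) : Perm (Fin n → K) :=
  coordPerm i fun r => Equiv.addRight (if r = 0 then 1 else 0)

theorem eq_zero_of_axisShift_apply_ne_self [DecidableEq K] {i : Fin n} {v : Fin n → K}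
    (h : axisShift i v ≠ v) {j : Fin n} (hj : j ≠ i) : v j = 0 := by
  by_contra hvj
  have hr : (fun j : {j // j ≠ i} => v j) ≠ 0 := fun h0 => hvj (congrFun h0 ⟨j, hj⟩)
  simp [axisShift, coordPerm_apply, hr] at h

theorem axisShift_zero [DecidableEq K] (i : Fin n) :
    axisShift i (0 : Fin n → K) = Pi.single i 1 := by
  ext j
  by_cases hj : j = i
  · subst hj; simp [axisShift, coordPerm_apply, Pi.zero_def]
  · simp [axisShift, coordPerm_apply, hj]

variable [Fintype K]

variable (K n) in
def tamePermGroup : Subgroup (Perm (Fin n → K)) where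
  carrier := {σ | IsTamePerm σ}
  one_mem' := isTamePerm_one
  mul_mem' := IsTamePerm.mul
  inv_mem' {σ} hσ := by
    have hpow : ∀ m : ℕ, IsTamePerm (σ ^ m) := fun m => by
      induction m with
      | zero => exact isTamePerm_one
      | succ m ih => exact pow_succ σ m ▸ ih.mul hσ
    rw [← one_mul σ⁻¹, ← pow_orderOf_eq_one σ, ← pow_sub_mul_pow σ (orderOf_pos σ)]
    simpa using hpow (orderOf σ - 1)

theorem isTamePerm_coordPerm_addRight (i : Fin n) (c : ({j // j ≠ i} → K) → K) :
    IsTamePerm (coordPerm i fun r => Equiv.addRight (c r)) := by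
  obtain ⟨p, hp⟩ := exists_eval_eq c
  refine ⟨_, IsTame.elementary i (rename Subtype.val p) fun hi => ?_, fun v => ?_⟩
  · obtain ⟨j, -, hj⟩ := mem_vars_rename _ _ hi
    exact j.2 hj
  · ext j
    by_cases hj : j = i
    · subst hj; simp [coordPerm_apply, eval_rename, hp, Function.comp_def]
    · simp [coordPerm_apply, hj]

theorem isTamePerm_addRight (t : Fin n → K) : IsTamePerm (Equiv.addRight t) := by
  have hsingle (i : Fin n) (a : K) : IsTamePerm (Equiv.addRight (Pi.single i a)) := by
    convert isTamePerm_coordPerm_addRight i fun _ => a using 1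
    ext v j
    by_cases hj : j = i
    · subst hj; simp [coordPerm_apply]
    · simp [coordPerm_apply, hj]
  rw [← Finset.univ_sum_single t]
  induction (Finset.univ : Finset (Fin n)) using Finset.induction_on with
  | empty => simpa using isTamePerm_one
  | insert i s hi ih => rw [Finset.sum_insert hi, addRight_add]; exact ih.mul (hsingle i (t i))

theorem tamePermGroup_isMultiplyPretransitive :
    IsMultiplyPretransitive (tamePermGroup K n) (Fin n → K) 2 := by
  have hlin (g : (Fin n → K) ≃ₗ[K] (Fin n → K)) : g.toEquiv ∈ tamePermGroup K n :=
    isTamePerm_of_linearMap g.toLinearMap fun _ => rfl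
  have htr (t : Fin n → K) : Equiv.addRight t ∈ tamePermGroup K n := isTamePerm_addRight t
  rw [is_two_pretransitive_iff]
  intro a b c d hab hcd
  obtain ⟨g, hg⟩ := exists_linearEquiv_apply_eq (K := K) (sub_ne_zero.2 hab.symm)
    (sub_ne_zero.2 hcd.symm)
  refine ⟨⟨Equiv.addRight c * g.toEquiv * Equiv.addRight (-a),
    mul_mem (mul_mem (htr c) (hlin g)) (htr (-a))⟩, ?_, ?_⟩
  · simp [Subgroup.smul_def]
  · simp [Subgroup.smul_def, ← sub_eq_add_neg, hg]

variable [DecidableEq K]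

theorem sign_axisShift (hq : Fintype.card K = 2) (i : Fin n) :
    sign (axisShift (K := K) i) = -1 := by
  rw [axisShift, sign_coordPerm, Fintype.prod_eq_single 0 fun r hr => by simp [hr]]
  simpa using sign_addRight_one_of_card_eq_two hq

theorem exists_isThreeCycle_mem_tamePermGroup (hn : 2 ≤ n) :
    ∃ σ ∈ tamePermGroup K n, IsThreeCycle σ := by
  set i : Fin n := ⟨0, by omega⟩
  set k : Fin n := ⟨1, by omega⟩
  have hik : i ≠ k := by simp [i, k, Fin.ext_iff]
  have hmem (j : Fin n) : axisShift (K := K) j ∈ tamePermGroup K n :=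
    isTamePerm_coordPerm_addRight j _
  refine ⟨_, mul_mem (mul_mem (mul_mem (hmem i) (hmem k)) (inv_mem (hmem i))) (inv_mem (hmem k)),
    isThreeCycle_commutator (t := 0) (fun v hvi hvk => ?_) ?_ ?_⟩
  · ext j
    by_cases hj : j = i
    · exact hj ▸ eq_zero_of_axisShift_apply_ne_self hvk hik
    · exact eq_zero_of_axisShift_apply_ne_self hvi hj
  · simp [axisShift_zero, Pi.single_eq_zero_iff]
  · simp [axisShift_zero]

theorem alternatingGroup_le_tamePermGroup (hn : 2 ≤ n) :
    alternatingGroup (Fin n → K) ≤ tamePermGroup K n := by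
  obtain ⟨σ, hσ, hσ3⟩ := exists_isThreeCycle_mem_tamePermGroup (K := K) hn
  exact alternatingGroup_le_of_isPreprimitive_of_isThreeCycle_mem
    (isPreprimitive_of_is_two_pretransitive (tamePermGroup_isMultiplyPretransitive (n := n)))
    hσ3 hσ

theorem exists_mem_tamePermGroup_sign_eq_neg_one
    (hq : Odd (Fintype.card K) ∨ Fintype.card K = 2) (i : Fin n) :
    ∃ σ ∈ tamePermGroup K n, sign σ = -1 := by
  rcases hq with hq | hq
  · obtain ⟨u, hu⟩ := exists_sign_toPerm_eq_neg_one_of_odd_card hq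
    refine ⟨_, isTamePerm_coordPerm_toPerm i u, ?_⟩
    rw [sign_coordPerm, Finset.prod_const, hu, Finset.card_univ, Fintype.card_fun]
    exact (hq.pow).neg_one_pow
  · exact ⟨axisShift i, isTamePerm_coordPerm_addRight i _, sign_axisShift hq i⟩

end Tame

/-- For n ≥ 2 and q odd or q = 2, every permutation of 𝔽_qⁿ is induced by a tame
automorphism: ε(TAₙ(𝔽_q)) = Sym(𝔽_qⁿ). -/
theorem stmt_14 (K : Type) [Field K] [Fintype K]
    (hq : Odd (Fintype.card K) ∨ Fintype.card K = 2) (n : ℕ) (hn : 2 ≤ n)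
    (τ : Equiv.Perm (Fin n → K)) :
    ∃ F : Fin n → MvPolynomial (Fin n) K,
      IsTame K n F ∧ ∀ v, τ v = fun i => eval v (F i) := by
  classical
  obtain ⟨σ, hσ, hσsign⟩ := exists_mem_tamePermGroup_sign_eq_neg_one hq (⟨0, by omega⟩ : Fin n)
  have htop := eq_top_of_alternatingGroup_le (alternatingGroup_le_tamePermGroup hn) hσ hσsign
  exact (htop ▸ Subgroup.mem_top τ : τ ∈ tamePermGroup K n)
end
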